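/- Suppose a (finite) Sleeping Beauty decision variant is additive, with per-awakening payoff functions π_v, and suppose Beauty plays a strategy σ choosing action a_I at each information set I such that a_I ∈ argmax_{a∈A_I} Σ_{v∈I} P(r(v))·π_v(a). Then for every alternative information-set strategy σ', the ex ante expected total payout of σ is at least that of σ'. In particular, if some actions include 'decline all bets' with payoff 0 at every awakening, σ's ex ante expected payout is at least 0, so Beauty cannot be Dutch-booked (cannot be guaranteed a strictly negative total). -/
import Mathlib

open Finset in
private lemma regroup_aux {R V : Type} [Fintype R] [Fintype V] [DecidableEq R]
    (P : R → ℝ) (rl : V → R) (f : V → ℝ) :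
    ∑ r, P r * ∑ v ∈ Finset.univ.filter (fun v => rl v = r), f v
      = ∑ v, P (rl v) * f v := by
  rw [← Finset.sum_fiberwise (g := rl) (f := fun v => P (rl v) * f v)]
  refine Finset.sum_congr rfl fun r _ => ?_
  rw [Finset.mul_sum]
  refine Finset.sum_congr rfl fun v hv => ?_
  simp only [Finset.mem_filter] at hv
  rw [hv.2]

open Finset in
private lemma regroup_info {V I : Type} [Fintype V] [DecidableEq I]
    (info : V → I) (g : V → ℝ) :
    ∑ v, g v = ∑ i ∈ Finset.univ.image info,
      ∑ v ∈ Finset.univ.filter (fun v => info v = i), g v := by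
  rw [Finset.sum_fiberwise_of_maps_to (fun v _ => Finset.mem_image_of_mem info (Finset.mem_univ v))]

open Finset in
/-- In an additive game, a strategy σ whose action at each information set
maximizes the P(r(v))-weighted per-round payoff is ex ante optimal among all
information-set strategies; in particular, if declining all bets (payoff 0 at
every awakening) is available, σ's ex ante expected bet payout is at least 0,
so Beauty cannot be Dutch-booked. -/
theorem additive_game_no_dutch_book
    {R V I A : Type} [Fintype R] [Fintype V] [DecidableEq I] [DecidableEq R]
    (P : R → ℝ) (hP : ∀ r, 0 ≤ P r)
    (rl : V → R) (info : V → I) (πv : V → A → ℝ)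
    (AI : I → Set A) (σ : I → A) (hσ : ∀ i, σ i ∈ AI i)
    (hopt : ∀ i, ∀ a ∈ AI i,
      ∑ v ∈ Finset.univ.filter (fun v => info v = i), P (rl v) * πv v a
        ≤ ∑ v ∈ Finset.univ.filter (fun v => info v = i),
            P (rl v) * πv v (σ i)) :
    (∀ σ' : I → A, (∀ i, σ' i ∈ AI i) →
      ∑ r, P r * ∑ v ∈ Finset.univ.filter (fun v => rl v = r),
          πv v (σ' (info v))
        ≤ ∑ r, P r * ∑ v ∈ Finset.univ.filter (fun v => rl v = r),
            πv v (σ (info v))) ∧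
    ((∃ a₀ : I → A, ∀ i, a₀ i ∈ AI i ∧ ∀ v, info v = i → πv v (a₀ i) = 0) →
      0 ≤ ∑ r, P r * ∑ v ∈ Finset.univ.filter (fun v => rl v = r),
            πv v (σ (info v))) := by
  have main : ∀ σ' : I → A, (∀ i, σ' i ∈ AI i) →
      ∑ r, P r * ∑ v ∈ Finset.univ.filter (fun v => rl v = r),
          πv v (σ' (info v))
        ≤ ∑ r, P r * ∑ v ∈ Finset.univ.filter (fun v => rl v = r),
            πv v (σ (info v)) := by
    intro σ' hσ'
    rw [regroup_aux, regroup_aux,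
      regroup_info info (fun v => P (rl v) * πv v (σ' (info v))),
      regroup_info info (fun v => P (rl v) * πv v (σ (info v)))]
    refine Finset.sum_le_sum fun i _ => ?_
    have h1 : ∑ v ∈ Finset.univ.filter (fun v => info v = i),
        P (rl v) * πv v (σ' (info v))
        = ∑ v ∈ Finset.univ.filter (fun v => info v = i),
        P (rl v) * πv v (σ' i) := by
      refine Finset.sum_congr rfl fun v hv => ?_
      simp only [Finset.mem_filter] at hv
      rw [hv.2]
    have h2 : ∑ v ∈ Finset.univ.filter (fun v => info v = i),
        P (rl v) * πv v (σ (info v))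
        = ∑ v ∈ Finset.univ.filter (fun v => info v = i),
        P (rl v) * πv v (σ i) := by
      refine Finset.sum_congr rfl fun v hv => ?_
      simp only [Finset.mem_filter] at hv
      rw [hv.2]
    rw [h1, h2]
    exact hopt i (σ' i) (hσ' i)
  refine ⟨main, ?_⟩
  rintro ⟨a₀, ha₀⟩
  have := main (fun i => a₀ i) (fun i => (ha₀ i).1)
  refine le_trans (le_of_eq ?_) this
  rw [regroup_aux]
  symm
  refine Finset.sum_eq_zero fun v _ => ?_
  rw [(ha₀ (info v)).2 v rfl, mul_zero]
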